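/- arXiv:2410.08078 — 2 statements merged into one kernel-verified Lean document; each statement's English description precedes it below -/
import Mathlib

section
/- Bias of the factual-adjusted contrast under parallel linear structural models: if E[Y(1) | N = n] = α₁ + γn and E[Y(0) | N = n] = α₀ + γn, and the observed N has distribution P_N = αP_{N(1)} + βP_{N(0)} with α + β = 1, then E_{N~P_N}[E[Y(1)|N]] - E_{N~P_N}[E[Y(0)|N]] - (E_{N(1)}[E[Y(1)|N]] - E_{N(0)}[E[Y(0)|N]]) = -γ·E[N(1) - N(0)]. -/
/-!
Under a common slope `γ`, the adjusted contrast over any single probability measure is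
`α₁ - α₀`, because the `γ n` terms cancel; the observed mixture `P_N` is a probability measure
with integrable `N`, so this applies to it. The counterfactual contrast integrates the two arms
against different laws and therefore equals `α₁ - α₀ + γ (E[N(1)] - E[N(0)])`.
-/

open MeasureTheory

namespace MeasureTheory

theorem integral_const_add_mul_id {μ : Measure ℝ} [IsFiniteMeasure μ]
    (hμ : Integrable (fun n => n) μ) (c γ : ℝ) :
    ∫ n, (c + γ * n) ∂μ = μ.real Set.univ * c + γ * ∫ n, n ∂μ := by
  rw [integral_add (integrable_const c) (hμ.const_mul γ), integral_const, integral_const_mul,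
    smul_eq_mul]

theorem integral_affine_sub_integral_affine_of_isProbabilityMeasure {μ : Measure ℝ}
    [IsProbabilityMeasure μ] (hμ : Integrable (fun n => n) μ) (a b γ : ℝ) :
    (∫ n, (a + γ * n) ∂μ) - ∫ n, (b + γ * n) ∂μ = a - b := by
  rw [integral_const_add_mul_id hμ, integral_const_add_mul_id hμ, probReal_univ]
  ring

theorem isProbabilityMeasure_ofReal_smul_add_ofReal_smul {Ω : Type*} [MeasurableSpace Ω]
    {μ ν : Measure Ω} [IsProbabilityMeasure μ] [IsProbabilityMeasure ν] {α β : ℝ}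
    (hα : 0 ≤ α) (hβ : 0 ≤ β) (hαβ : α + β = 1) :
    IsProbabilityMeasure (ENNReal.ofReal α • μ + ENNReal.ofReal β • ν) := by
  constructor
  simp [← ENNReal.ofReal_add hα hβ, hαβ]

theorem Integrable.ofReal_smul_add_ofReal_smul_measure {Ω : Type*} [MeasurableSpace Ω]
    {f : Ω → ℝ} {μ ν : Measure Ω} (hμ : Integrable f μ) (hν : Integrable f ν) (α β : ℝ) :
    Integrable f (ENNReal.ofReal α • μ + ENNReal.ofReal β • ν) :=
  (hμ.smul_measure ENNReal.ofReal_ne_top).add_measure (hν.smul_measure ENNReal.ofReal_ne_top)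

end MeasureTheory

/-- Bias of the factual-adjusted contrast under parallel linear structural models:
if `E[Y(1)|N=n] = α₁ + γn`, `E[Y(0)|N=n] = α₀ + γn`, and the observed `N` has
distribution `P_N = α P_{N(1)} + β P_{N(0)}` with `α + β = 1`, then the difference
between the factual-adjusted contrast and the counterfactual contrast equals
`-γ (E[N(1)] - E[N(0)])`. -/
theorem stmt10
    (P1 P0 : Measure ℝ) [IsProbabilityMeasure P1] [IsProbabilityMeasure P0]
    (hP1int : Integrable (fun n => n) P1) (hP0int : Integrable (fun n => n) P0)
    (α β : ℝ) (hα : 0 ≤ α) (hβ : 0 ≤ β) (hαβ : α + β = 1)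
    (PN : Measure ℝ) (hPN : PN = ENNReal.ofReal α • P1 + ENNReal.ofReal β • P0)
    (α₁ α₀ γ : ℝ) :
    ((∫ n, (α₁ + γ * n) ∂PN) - ∫ n, (α₀ + γ * n) ∂PN)
      - ((∫ n, (α₁ + γ * n) ∂P1) - ∫ n, (α₀ + γ * n) ∂P0)
    = -γ * ((∫ n, n ∂P1) - ∫ n, n ∂P0) := by
  subst hPN
  have hmixture := isProbabilityMeasure_ofReal_smul_add_ofReal_smul (μ := P1) (ν := P0) hα hβ hαβ
  rw [integral_affine_sub_integral_affine_of_isProbabilityMeasure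
      (hP1int.ofReal_smul_add_ofReal_smul_measure hP0int α β),
    integral_const_add_mul_id hP1int, integral_const_add_mul_id hP0int,
    probReal_univ, probReal_univ]
  ring
end

section
/- With A ~ Bernoulli(π) independent of (N, Y(0), Y(1)) and optimal NCO adjustment h_a(N) = E[Y|A=a, N] - E[Y|A=a], the variance of the adjusted influence function D* satisfies Var(D*) = E[Var(Y(1)|N)]/π + E[Var(Y(0)|N)]/(1-π) + Var(E[Y(1)-Y(0)|N]), which is at most Var(Y(1))/π + Var(Y(0))/(1-π). -/
open MeasureTheory ProbabilityTheory

private lemma aux_var_congr {Ω : Type*} [MeasurableSpace Ω] {μ : Measure Ω} {X Y : Ω → ℝ}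
    (h : X =ᵐ[μ] Y) : variance X μ = variance Y μ := by
  have hi : μ[X] = μ[Y] := integral_congr_ae h
  simp only [variance, evariance]
  congr 1
  refine lintegral_congr_ae ?_
  filter_upwards [h] with ω hω
  rw [hω, hi]

private theorem MeasureTheory.MemLp.variance_eq {Ω : Type*} [MeasurableSpace Ω] {μ : Measure Ω}
    [IsProbabilityMeasure μ] {X : Ω → ℝ} (hX : MemLp X 2 μ) :
    variance X μ = μ[((X - fun _ => μ[X]) ^ 2 : Ω → ℝ)] := by
  rw [variance_eq_integral hX.aemeasurable]; rfl

private lemma aux_indep_mono {Ω : Type*} {m0 : MeasurableSpace Ω} {μ : Measure Ω}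
    {m₁ m₂ m₂' : MeasurableSpace Ω} (h : Indep m₁ m₂ μ) (hle : m₂' ≤ m₂) :
    Indep m₁ m₂' μ := by
  rw [Indep_iff] at h ⊢
  exact fun t1 t2 h1 h2 => h t1 t2 h1 (hle _ h2)

private lemma aux_int_mul {Ω : Type*} [MeasurableSpace Ω] {μ : Measure Ω} {f g : Ω → ℝ}
    (hf : MemLp f 2 μ) (hg : MemLp g 2 μ) : Integrable (fun ω => f ω * g ω) μ := by
  have h : MemLp (f • g) 1 μ := hg.smul hf
  exact memLp_one_iff_integrable.1 h

private lemma aux_condexp_L2 {Ω : Type*} {m : MeasurableSpace Ω} {m0 : MeasurableSpace Ω}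
    (μ : Measure Ω)
    [IsProbabilityMeasure μ] (hm : m ≤ m0) {f : Ω → ℝ}
    (hf : MemLp f 2 μ) : MemLp (μ[f|m]) 2 μ := by
  set g := condExpL2 ℝ ℝ hm (hf.toLp f) with hg
  have hgm : AEStronglyMeasurable[m] (g : Ω → ℝ) μ := lpMeas.aestronglyMeasurable g
  have heq : (g : Ω → ℝ) =ᵐ[μ] μ[f|m] := by
    refine ae_eq_condExp_of_forall_setIntegral_eq hm (hf.integrable one_le_two)
      (fun s _ hμs => integrableOn_condExpL2_of_measure_ne_top hm hμs.ne _)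
      (fun s hs hμs => ?_) hgm
    rw [integral_condExpL2_eq_of_fin_meas_real _ hs hμs.ne]
    exact setIntegral_congr_ae (hm s hs) ((hf.coeFn_toLp).mono fun x hx _ => hx)
  exact (Lp.memLp (g : Lp ℝ 2 μ)).ae_eq heq

private lemma aux_orth {Ω : Type*} {m : MeasurableSpace Ω} {m0 : MeasurableSpace Ω}
    {μ : Measure Ω}
    [IsProbabilityMeasure μ] (hm : m ≤ m0) {f g : Ω → ℝ}
    (hf : MemLp f 2 μ) (hgm : StronglyMeasurable[m] g) (hg : MemLp g 2 μ) :
    ∫ ω, g ω * (f ω - (μ[f|m]) ω) ∂μ = 0 := by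
  have hfm2 : MemLp (μ[f|m]) 2 μ := aux_condexp_L2 μ hm hf
  have hd2 : MemLp (f - μ[f|m]) 2 μ := hf.sub hfm2
  have hdint : Integrable (f - μ[f|m]) μ := hd2.integrable one_le_two
  have hprod : Integrable (g * (f - μ[f|m])) μ := aux_int_mul hg hd2
  have h1 : μ[g * (f - μ[f|m])|m] =ᵐ[μ] g * μ[f - μ[f|m]|m] :=
    condExp_mul_of_stronglyMeasurable_left hgm hprod hdint
  have h3 : μ[μ[f|m]|m] = μ[f|m] :=
    condExp_of_stronglyMeasurable hm stronglyMeasurable_condExp integrable_condExp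
  have h2 : ∀ᵐ ω ∂μ, (μ[f - μ[f|m]|m]) ω = 0 := by
    filter_upwards [condExp_sub (hf.integrable one_le_two) integrable_condExp (m := m)] with ω e
    rw [e, Pi.sub_apply, h3, sub_self]
  calc ∫ ω, g ω * (f ω - (μ[f|m]) ω) ∂μ
      = ∫ ω, (μ[g * (f - μ[f|m])|m]) ω ∂μ := (integral_condExp hm).symm
    _ = ∫ _ω, (0 : ℝ) ∂μ := by
        refine integral_congr_ae ?_
        filter_upwards [h1, h2] with ω e1 e2
        rw [e1, Pi.mul_apply, e2, mul_zero]
    _ = 0 := integral_zero _ _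

private theorem aux_main {Ω : Type*} {m mT : MeasurableSpace Ω} {m0 : MeasurableSpace Ω}
    (μ : Measure Ω) [IsProbabilityMeasure μ]
    (hm : m ≤ mT) (hmT : mT ≤ m0)
    (A Y0 Y1 : Ω → ℝ) (π : ℝ) (hπ0 : 0 < π) (hπ1 : π < 1)
    (hA01 : ∀ ω, A ω = 0 ∨ A ω = 1)
    (hAmeas : Measurable A)
    (hEA : ∫ ω, A ω ∂μ = π)
    (hindepT : Indep (MeasurableSpace.comap A inferInstance) mT μ)
    (hY0T : Measurable[mT] Y0) (hY1T : Measurable[mT] Y1)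
    (hY0L2 : MemLp Y0 2 μ) (hY1L2 : MemLp Y1 2 μ)
    (μ₀ μ₁ : ℝ) (hμ₀ : μ₀ = ∫ ω, Y0 ω ∂μ) (hμ₁ : μ₁ = ∫ ω, Y1 ω ∂μ)
    (Dstar : Ω → ℝ)
    (hDae : Dstar =ᵐ[μ] fun ω => π⁻¹ * (A ω * (Y1 ω - (μ[Y1|m]) ω))
      - (1 - π)⁻¹ * ((1 - A ω) * (Y0 ω - (μ[Y0|m]) ω))
      + ((μ[Y1|m]) ω - (μ[Y0|m]) ω - (μ₁ - μ₀))) :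
    variance Dstar μ
      = (∫ ω, (Y1 ω - (μ[Y1|m]) ω) ^ 2 ∂μ) / π + (∫ ω, (Y0 ω - (μ[Y0|m]) ω) ^ 2 ∂μ) / (1 - π)
        + variance (fun ω => (μ[Y1|m]) ω - (μ[Y0|m]) ω) μ
    ∧ variance Dstar μ ≤ variance Y1 μ / π + variance Y0 μ / (1 - π) := by
  have hπ1' : (0:ℝ) < 1 - π := by linarith
  have hm0 : m ≤ m0 := hm.trans hmT
  set M₁ : Ω → ℝ := μ[Y1|m] with hM₁def
  set M₀ : Ω → ℝ := μ[Y0|m] with hM₀def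
  have hM1L2 : MemLp M₁ 2 μ := aux_condexp_L2 μ hm0 hY1L2
  have hM0L2 : MemLp M₀ 2 μ := aux_condexp_L2 μ hm0 hY0L2
  have hM1sm : StronglyMeasurable[m] M₁ := stronglyMeasurable_condExp
  have hM0sm : StronglyMeasurable[m] M₀ := stronglyMeasurable_condExp
  have hM1T : Measurable[mT] M₁ := hM1sm.measurable.mono hm le_rfl
  have hM0T : Measurable[mT] M₀ := hM0sm.measurable.mono hm le_rfl
  set U : Ω → ℝ := fun ω => Y1 ω - M₁ ω with hUdef
  set V : Ω → ℝ := fun ω => Y0 ω - M₀ ω with hVdef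
  set W : Ω → ℝ := fun ω => M₁ ω - M₀ ω - (μ₁ - μ₀) with hWdef
  have hUL2 : MemLp U 2 μ := hY1L2.sub hM1L2
  have hVL2 : MemLp V 2 μ := hY0L2.sub hM0L2
  have hWL2 : MemLp W 2 μ := (hM1L2.sub hM0L2).sub (memLp_const _)
  have hUT : Measurable[mT] U := hY1T.sub hM1T
  have hVT : Measurable[mT] V := hY0T.sub hM0T
  have hWT : Measurable[mT] W := (hM1T.sub hM0T).sub measurable_const
  -- independence-based product formulas
  have key : ∀ g : Ω → ℝ, Measurable[mT] g → ∫ ω, A ω * g ω ∂μ = π * ∫ ω, g ω ∂μ := by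
    intro g hg
    have hAg : IndepFun A g μ := by
      rw [IndepFun_iff_Indep]
      exact aux_indep_mono hindepT (measurable_iff_comap_le.1 hg)
    have := hAg.integral_mul_eq_mul_integral hAmeas.aestronglyMeasurable
      ((hg.mono hmT le_rfl).aestronglyMeasurable)
    rw [← hEA]
    exact this
  have hAint : Integrable A μ := by
    refine (integrable_const (1:ℝ)).mono' hAmeas.aestronglyMeasurable ?_
    refine ae_of_all _ fun ω => ?_
    rcases hA01 ω with h | h <;> simp [h]
  have hE1A : ∫ ω, (1 - A ω) ∂μ = 1 - π := by
    rw [integral_sub (integrable_const 1) hAint, hEA]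
    simp
  have key' : ∀ g : Ω → ℝ, Measurable[mT] g →
      ∫ ω, (1 - A ω) * g ω ∂μ = (1 - π) * ∫ ω, g ω ∂μ := by
    intro g hg
    have hAg : IndepFun A g μ := by
      rw [IndepFun_iff_Indep]
      exact aux_indep_mono hindepT (measurable_iff_comap_le.1 hg)
    have hAg' : IndepFun (fun ω => 1 - A ω) g μ :=
      hAg.comp (measurable_const.sub measurable_id) measurable_id
    have := hAg'.integral_mul_eq_mul_integral (measurable_const.sub hAmeas).aestronglyMeasurable
      ((hg.mono hmT le_rfl).aestronglyMeasurable)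
    rw [← hE1A]
    exact this
  -- orthogonality
  have horthU : ∀ g : Ω → ℝ, StronglyMeasurable[m] g → MemLp g 2 μ →
      ∫ ω, g ω * U ω ∂μ = 0 := fun g hgm hg => aux_orth hm0 hY1L2 hgm hg
  have horthV : ∀ g : Ω → ℝ, StronglyMeasurable[m] g → MemLp g 2 μ →
      ∫ ω, g ω * V ω ∂μ = 0 := fun g hgm hg => aux_orth hm0 hY0L2 hgm hg
  have hWsm : StronglyMeasurable[m] W := (hM1sm.sub hM0sm).sub stronglyMeasurable_const
  have hWU : ∫ ω, W ω * U ω ∂μ = 0 := horthU W hWsm hWL2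
  have hWV : ∫ ω, W ω * V ω ∂μ = 0 := horthV W hWsm hWL2
  -- means
  have hEM1 : ∫ ω, M₁ ω ∂μ = μ₁ := by rw [hM₁def, integral_condExp hm0, hμ₁]
  have hEM0 : ∫ ω, M₀ ω ∂μ = μ₀ := by rw [hM₀def, integral_condExp hm0, hμ₀]
  have hM1int : Integrable M₁ μ := hM1L2.integrable one_le_two
  have hM0int : Integrable M₀ μ := hM0L2.integrable one_le_two
  have hEU : ∫ ω, U ω ∂μ = 0 := by
    rw [hUdef]
    rw [integral_sub (hY1L2.integrable one_le_two) hM1int, hEM1, hμ₁, sub_self]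
  have hEV : ∫ ω, V ω ∂μ = 0 := by
    rw [hVdef]
    rw [integral_sub (hY0L2.integrable one_le_two) hM0int, hEM0, hμ₀, sub_self]
  have hEMd : ∫ ω, (M₁ ω - M₀ ω) ∂μ = μ₁ - μ₀ := by
    rw [integral_sub hM1int hM0int, hEM1, hEM0]
  have hEW : ∫ ω, W ω ∂μ = 0 := by
    have hsub : Integrable (fun ω => M₁ ω - M₀ ω) μ := hM1int.sub hM0int
    simp only [hWdef]
    rw [integral_sub hsub (integrable_const _), integral_const]
    simp only [measure_univ, probReal_univ, ENNReal.toReal_one, smul_eq_mul, one_mul]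
    rw [hEMd, sub_self]
  -- the nice representative
  set D' : Ω → ℝ := fun ω => π⁻¹ * (A ω * U ω) - (1 - π)⁻¹ * ((1 - A ω) * V ω) + W ω
    with hD'def
  have hDae' : Dstar =ᵐ[μ] D' := hDae
  -- MemLp of D'
  have hAU2 : MemLp (fun ω => A ω * U ω) 2 μ := by
    refine hUL2.of_le (hAmeas.aestronglyMeasurable.mul hUL2.1) (ae_of_all _ fun ω => ?_)
    rcases hA01 ω with h | h <;> simp [h]
  have h1AV2 : MemLp (fun ω => (1 - A ω) * V ω) 2 μ := by
    refine hVL2.of_le ((measurable_const.sub hAmeas).aestronglyMeasurable.mul hVL2.1)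
      (ae_of_all _ fun ω => ?_)
    rcases hA01 ω with h | h <;> simp [h]
  have hD'2 : MemLp D' 2 μ :=
    ((hAU2.const_mul π⁻¹).sub (h1AV2.const_mul (1 - π)⁻¹)).add hWL2
  -- mean of D'
  have hAUint : Integrable (fun ω => A ω * U ω) μ := hAU2.integrable one_le_two
  have h1AVint : Integrable (fun ω => (1 - A ω) * V ω) μ := h1AV2.integrable one_le_two
  have hWint : Integrable W μ := hWL2.integrable one_le_two
  have hED' : ∫ ω, D' ω ∂μ = 0 := by
    have hs1 : Integrable (fun ω => π⁻¹ * (A ω * U ω)) μ := hAUint.const_mul _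
    have hs2 : Integrable (fun ω => (1 - π)⁻¹ * ((1 - A ω) * V ω)) μ := h1AVint.const_mul _
    have hsub : Integrable
        (fun ω => π⁻¹ * (A ω * U ω) - (1 - π)⁻¹ * ((1 - A ω) * V ω)) μ := hs1.sub hs2
    simp only [hD'def]
    rw [integral_add hsub hWint, integral_sub hs1 hs2,
      integral_const_mul _ _, integral_const_mul _ _, key U hUT, key' V hVT, hEU, hEV, hEW]
    ring
  -- second moment of D'
  set g₁ : Ω → ℝ := fun ω => (π⁻¹ * U ω + W ω) ^ 2 with hg₁def
  set g₀ : Ω → ℝ := fun ω => (W ω - (1 - π)⁻¹ * V ω) ^ 2 with hg₀def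
  have hg₁T : Measurable[mT] g₁ := ((hUT.const_mul _).add hWT).pow_const 2
  have hg₀T : Measurable[mT] g₀ := (hWT.sub (hVT.const_mul _)).pow_const 2
  have hg₁int : Integrable g₁ μ := ((hUL2.const_mul π⁻¹).add hWL2).integrable_sq
  have hg₀int : Integrable g₀ μ := (hWL2.sub (hVL2.const_mul (1 - π)⁻¹)).integrable_sq
  have hU2int : Integrable (fun ω => U ω ^ 2) μ := hUL2.integrable_sq
  have hV2int : Integrable (fun ω => V ω ^ 2) μ := hVL2.integrable_sq
  have hW2int : Integrable (fun ω => W ω ^ 2) μ := hWL2.integrable_sq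
  have hWUint : Integrable (fun ω => W ω * U ω) μ := aux_int_mul hWL2 hUL2
  have hWVint : Integrable (fun ω => W ω * V ω) μ := aux_int_mul hWL2 hVL2
  have hInt_g₁ : ∫ ω, g₁ ω ∂μ = π⁻¹ ^ 2 * ∫ ω, U ω ^ 2 ∂μ + ∫ ω, W ω ^ 2 ∂μ := by
    have expand : ∀ ω, g₁ ω = π⁻¹ ^ 2 * U ω ^ 2 + (2 * π⁻¹) * (W ω * U ω) + W ω ^ 2 :=
      fun ω => by rw [hg₁def]; ring
    have hs1 : Integrable (fun ω => π⁻¹ ^ 2 * U ω ^ 2) μ := hU2int.const_mul _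
    have hs2 : Integrable (fun ω => (2 * π⁻¹) * (W ω * U ω)) μ := hWUint.const_mul _
    have hs12 : Integrable (fun ω => π⁻¹ ^ 2 * U ω ^ 2 + (2 * π⁻¹) * (W ω * U ω)) μ :=
      hs1.add hs2
    rw [integral_congr_ae (Filter.Eventually.of_forall expand),
      integral_add hs12 hW2int, integral_add hs1 hs2,
      integral_const_mul _ _, integral_const_mul _ _, hWU]
    ring
  have hInt_g₀ : ∫ ω, g₀ ω ∂μ = (1 - π)⁻¹ ^ 2 * ∫ ω, V ω ^ 2 ∂μ + ∫ ω, W ω ^ 2 ∂μ := by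
    have expand : ∀ ω, g₀ ω
        = (1 - π)⁻¹ ^ 2 * V ω ^ 2 + (-(2 * (1 - π)⁻¹)) * (W ω * V ω) + W ω ^ 2 :=
      fun ω => by rw [hg₀def]; ring
    have hs1 : Integrable (fun ω => (1 - π)⁻¹ ^ 2 * V ω ^ 2) μ := hV2int.const_mul _
    have hs2 : Integrable (fun ω => (-(2 * (1 - π)⁻¹)) * (W ω * V ω)) μ := hWVint.const_mul _
    have hs12 : Integrable
        (fun ω => (1 - π)⁻¹ ^ 2 * V ω ^ 2 + (-(2 * (1 - π)⁻¹)) * (W ω * V ω)) μ := hs1.add hs2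
    rw [integral_congr_ae (Filter.Eventually.of_forall expand),
      integral_add hs12 hW2int, integral_add hs1 hs2,
      integral_const_mul _ _, integral_const_mul _ _, hWV]
    ring
  have hA_g₁int : Integrable (fun ω => A ω * g₁ ω) μ := by
    refine hg₁int.abs.mono' (hAmeas.aestronglyMeasurable.mul hg₁int.1) ?_
    refine ae_of_all _ fun ω => ?_
    rcases hA01 ω with h | h <;> simp [h, abs_nonneg]
  have h1A_g₀int : Integrable (fun ω => (1 - A ω) * g₀ ω) μ := by
    refine hg₀int.abs.mono' ((measurable_const.sub hAmeas).aestronglyMeasurable.mul hg₀int.1) ?_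
    refine ae_of_all _ fun ω => ?_
    rcases hA01 ω with h | h <;> simp [h, abs_nonneg]
  have hsq : ∀ ω, D' ω ^ 2 = A ω * g₁ ω + (1 - A ω) * g₀ ω := by
    intro ω
    rcases hA01 ω with h | h <;> rw [hD'def, hg₁def, hg₀def] <;> simp only [h] <;> ring
  have hED'2 : ∫ ω, D' ω ^ 2 ∂μ
      = (∫ ω, U ω ^ 2 ∂μ) / π + (∫ ω, V ω ^ 2 ∂μ) / (1 - π) + ∫ ω, W ω ^ 2 ∂μ := by
    rw [integral_congr_ae (Filter.Eventually.of_forall hsq),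
      integral_add hA_g₁int h1A_g₀int, key g₁ hg₁T, key' g₀ hg₀T, hInt_g₁, hInt_g₀]
    field_simp
    ring
  -- the variance of Dstar
  have hvar : variance Dstar μ
      = (∫ ω, U ω ^ 2 ∂μ) / π + (∫ ω, V ω ^ 2 ∂μ) / (1 - π) + ∫ ω, W ω ^ 2 ∂μ := by
    rw [aux_var_congr hDae', variance_eq_sub hD'2]
    have h2 : μ[D' ^ 2] = ∫ ω, D' ω ^ 2 ∂μ := rfl
    have h1 : μ[D'] = ∫ ω, D' ω ∂μ := rfl
    rw [h2, h1, hED', hED'2]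
    ring
  -- variance of M₁ - M₀
  have hvarW : variance (fun ω => M₁ ω - M₀ ω) μ = ∫ ω, W ω ^ 2 ∂μ := by
    have hX2 : MemLp (fun ω => M₁ ω - M₀ ω) 2 μ := hM1L2.sub hM0L2
    rw [hX2.variance_eq]
    have : ((fun ω => M₁ ω - M₀ ω) - fun _ => μ[fun ω => M₁ ω - M₀ ω]) ^ 2
        = fun ω => W ω ^ 2 := by
      funext ω
      have : μ[fun ω => M₁ ω - M₀ ω] = μ₁ - μ₀ := hEMd
      simp only [Pi.pow_apply, Pi.sub_apply, this, hWdef]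
    rw [this]
  -- variances of Y1, Y0
  have hvarY1 : variance Y1 μ = ∫ ω, U ω ^ 2 ∂μ + ∫ ω, (M₁ ω - μ₁) ^ 2 ∂μ := by
    rw [hY1L2.variance_eq]
    have h1 : ((Y1 - fun _ => μ[Y1]) ^ 2)
        = fun ω => U ω ^ 2 + 2 * ((M₁ ω - μ₁) * U ω) + (M₁ ω - μ₁) ^ 2 := by
      funext ω
      have hmean : μ[Y1] = μ₁ := hμ₁.symm
      simp only [Pi.pow_apply, Pi.sub_apply, hmean, hUdef]
      ring
    have hM1c2 : MemLp (fun ω => M₁ ω - μ₁) 2 μ := hM1L2.sub (memLp_const _)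
    have hMUint : Integrable (fun ω => (M₁ ω - μ₁) * U ω) μ := aux_int_mul hM1c2 hUL2
    have horth1 : ∫ ω, (M₁ ω - μ₁) * U ω ∂μ = 0 :=
      horthU _ (hM1sm.sub stronglyMeasurable_const) hM1c2
    have hs2 : Integrable (fun ω => 2 * ((M₁ ω - μ₁) * U ω)) μ := hMUint.const_mul 2
    have hs3 : Integrable (fun ω => (M₁ ω - μ₁) ^ 2) μ := hM1c2.integrable_sq
    have hs12 : Integrable (fun ω => U ω ^ 2 + 2 * ((M₁ ω - μ₁) * U ω)) μ := hU2int.add hs2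
    rw [h1]
    beta_reduce
    rw [integral_add hs12 hs3, integral_add hU2int hs2, integral_const_mul _ _, horth1]
    ring
  have hvarY0 : variance Y0 μ = ∫ ω, V ω ^ 2 ∂μ + ∫ ω, (M₀ ω - μ₀) ^ 2 ∂μ := by
    rw [hY0L2.variance_eq]
    have h1 : ((Y0 - fun _ => μ[Y0]) ^ 2)
        = fun ω => V ω ^ 2 + 2 * ((M₀ ω - μ₀) * V ω) + (M₀ ω - μ₀) ^ 2 := by
      funext ω
      have hmean : μ[Y0] = μ₀ := hμ₀.symm
      simp only [Pi.pow_apply, Pi.sub_apply, hmean, hVdef]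
      ring
    have hM0c2 : MemLp (fun ω => M₀ ω - μ₀) 2 μ := hM0L2.sub (memLp_const _)
    have hMVint : Integrable (fun ω => (M₀ ω - μ₀) * V ω) μ := aux_int_mul hM0c2 hVL2
    have horth0 : ∫ ω, (M₀ ω - μ₀) * V ω ∂μ = 0 :=
      horthV _ (hM0sm.sub stronglyMeasurable_const) hM0c2
    have hs2 : Integrable (fun ω => 2 * ((M₀ ω - μ₀) * V ω)) μ := hMVint.const_mul 2
    have hs3 : Integrable (fun ω => (M₀ ω - μ₀) ^ 2) μ := hM0c2.integrable_sq
    have hs12 : Integrable (fun ω => V ω ^ 2 + 2 * ((M₀ ω - μ₀) * V ω)) μ := hV2int.add hs2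
    rw [h1]
    beta_reduce
    rw [integral_add hs12 hs3, integral_add hV2int hs2, integral_const_mul _ _, horth0]
    ring
  constructor
  · rw [hvar, hvarW]
  · -- inequality part
    have hM1c2 : MemLp (fun ω => M₁ ω - μ₁) 2 μ := hM1L2.sub (memLp_const _)
    have hM0c2 : MemLp (fun ω => M₀ ω - μ₀) 2 μ := hM0L2.sub (memLp_const _)
    have hRint : Integrable (fun ω => (M₁ ω - μ₁) ^ 2 / π + (M₀ ω - μ₀) ^ 2 / (1 - π)) μ :=
      (hM1c2.integrable_sq.div_const π).add (hM0c2.integrable_sq.div_const (1 - π))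
    have hpt : ∀ ω, W ω ^ 2 ≤ (M₁ ω - μ₁) ^ 2 / π + (M₀ ω - μ₀) ^ 2 / (1 - π) := by
      intro ω
      have hWeq : W ω = (M₁ ω - μ₁) - (M₀ ω - μ₀) := by rw [hWdef]; ring
      set a := M₁ ω - μ₁
      set b := M₀ ω - μ₀
      rw [hWeq, div_add_div _ _ (ne_of_gt hπ0) (ne_of_gt hπ1'), le_div_iff₀ (by positivity)]
      nlinarith [sq_nonneg (a * (1 - π) + b * π)]
    have hW2le : ∫ ω, W ω ^ 2 ∂μ
        ≤ ∫ ω, ((M₁ ω - μ₁) ^ 2 / π + (M₀ ω - μ₀) ^ 2 / (1 - π)) ∂μ :=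
      integral_mono hW2int hRint hpt
    rw [integral_add (hM1c2.integrable_sq.div_const π) (hM0c2.integrable_sq.div_const (1 - π)),
      integral_div, integral_div] at hW2le
    rw [hvar, hvarY1, hvarY0, add_div, add_div]
    linarith

/-- Variance reduction from NCO adjustment: with `A ⫫ (N, Y(0), Y(1))` and the
optimal working functions (conditional means given `N`), the variance of the
efficient influence function equals
`E[Var(Y(1)|N)]/π + E[Var(Y(0)|N)]/(1-π) + Var(E[Y(1)-Y(0)|N])`, which is at most
`Var(Y(1))/π + Var(Y(0))/(1-π)`, the variance of the unadjusted influence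
function. -/
theorem stmt17
    {Ω : Type*} [MeasurableSpace Ω] (μ : Measure Ω) [IsProbabilityMeasure μ]
    (A N Y0 Y1 : Ω → ℝ) (π : ℝ) (hπ0 : 0 < π) (hπ1 : π < 1)
    (hA01 : ∀ ω, A ω = 0 ∨ A ω = 1)
    (hAmeas : Measurable A) (hNmeas : Measurable N)
    (hY0meas : Measurable Y0) (hY1meas : Measurable Y1)
    (hprob : μ {ω | A ω = 1} = ENNReal.ofReal π)
    (hindep : IndepFun A (fun ω => (N ω, Y0 ω, Y1 ω)) μ)
    (hNL2 : MemLp N 2 μ) (hY0L2 : MemLp Y0 2 μ) (hY1L2 : MemLp Y1 2 μ)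
    (Y : Ω → ℝ) (hY : ∀ ω, Y ω = A ω * Y1 ω + (1 - A ω) * Y0 ω)
    (μ₀ μ₁ : ℝ) (hμ₀ : μ₀ = ∫ ω, Y0 ω ∂μ) (hμ₁ : μ₁ = ∫ ω, Y1 ω ∂μ)
    -- conditional means of the potential outcomes given N
    (m₀ m₁ : Ω → ℝ)
    (hm₀ : m₀ =ᵐ[μ] μ[Y0 | MeasurableSpace.comap N inferInstance])
    (hm₁ : m₁ =ᵐ[μ] μ[Y1 | MeasurableSpace.comap N inferInstance])
    -- the efficient influence function adjusting for N
    (Dstar : Ω → ℝ)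
    (hDstar : ∀ ω, Dstar ω = A ω * (Y ω - μ₁) / π - (1 - A ω) * (Y ω - μ₀) / (1 - π)
      - (A ω - π) * ((m₁ ω - μ₁) / π + (m₀ ω - μ₀) / (1 - π))) :
    variance Dstar μ
      = (∫ ω, (Y1 ω - m₁ ω) ^ 2 ∂μ) / π + (∫ ω, (Y0 ω - m₀ ω) ^ 2 ∂μ) / (1 - π)
        + variance (fun ω => m₁ ω - m₀ ω) μ
    ∧ variance Dstar μ ≤ variance Y1 μ / π + variance Y0 μ / (1 - π) := by
  have hπ0' : π ≠ 0 := hπ0.ne'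
  have hπ1' : (1 : ℝ) - π ≠ 0 := by intro h; apply absurd hπ1; linarith
  have hTmeas : Measurable (fun ω => (N ω, Y0 ω, Y1 ω)) :=
    hNmeas.prodMk (hY0meas.prodMk hY1meas)
  have hTm : Measurable[MeasurableSpace.comap (fun ω => (N ω, Y0 ω, Y1 ω)) inferInstance]
      (fun ω => (N ω, Y0 ω, Y1 ω)) := measurable_iff_comap_le.2 le_rfl
  have hNT : Measurable[MeasurableSpace.comap (fun ω => (N ω, Y0 ω, Y1 ω)) inferInstance] N :=
    measurable_fst.comp hTm
  have hY0T : Measurable[MeasurableSpace.comap (fun ω => (N ω, Y0 ω, Y1 ω)) inferInstance] Y0 :=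
    (measurable_fst.comp measurable_snd).comp hTm
  have hY1T : Measurable[MeasurableSpace.comap (fun ω => (N ω, Y0 ω, Y1 ω)) inferInstance] Y1 :=
    (measurable_snd.comp measurable_snd).comp hTm
  have hm : MeasurableSpace.comap N inferInstance
      ≤ MeasurableSpace.comap (fun ω => (N ω, Y0 ω, Y1 ω)) inferInstance :=
    measurable_iff_comap_le.1 hNT
  have hmT : MeasurableSpace.comap (fun ω => (N ω, Y0 ω, Y1 ω)) inferInstance
      ≤ (inferInstance : MeasurableSpace Ω) := measurable_iff_comap_le.1 hTmeas
  have hindepT : Indep (MeasurableSpace.comap A inferInstance)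
      (MeasurableSpace.comap (fun ω => (N ω, Y0 ω, Y1 ω)) inferInstance) μ :=
    (IndepFun_iff_Indep _ _ _).1 hindep
  have hEA : ∫ ω, A ω ∂μ = π := by
    have hset : MeasurableSet {ω | A ω = 1} := hAmeas (measurableSet_singleton 1)
    have hind : A = Set.indicator {ω | A ω = 1} (fun _ => (1:ℝ)) := by
      funext ω
      rcases hA01 ω with h | h <;> simp [Set.indicator_apply, h]
    rw [hind, integral_indicator_const _ hset, measureReal_def, hprob, ENNReal.toReal_ofReal hπ0.le,
      smul_eq_mul, mul_one]
  have hDae : Dstar =ᵐ[μ] fun ω =>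
      π⁻¹ * (A ω * (Y1 ω - (μ[Y1|MeasurableSpace.comap N inferInstance]) ω))
      - (1 - π)⁻¹ * ((1 - A ω) * (Y0 ω - (μ[Y0|MeasurableSpace.comap N inferInstance]) ω))
      + ((μ[Y1|MeasurableSpace.comap N inferInstance]) ω
        - (μ[Y0|MeasurableSpace.comap N inferInstance]) ω - (μ₁ - μ₀)) := by
    filter_upwards [hm₀, hm₁] with ω h0 h1
    rw [hDstar ω, hY ω, ← h0, ← h1]
    rcases hA01 ω with h | h <;> rw [h] <;> field_simp <;> ring
  obtain ⟨h₁, h₂⟩ := aux_main μ hm hmT A Y0 Y1 π hπ0 hπ1 hA01 hAmeas hEA hindepT hY0T hY1T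
    hY0L2 hY1L2 μ₀ μ₁ hμ₀ hμ₁ Dstar hDae
  constructor
  · have e1 : ∫ ω, (Y1 ω - m₁ ω) ^ 2 ∂μ
        = ∫ ω, (Y1 ω - (μ[Y1|MeasurableSpace.comap N inferInstance]) ω) ^ 2 ∂μ := by
      refine integral_congr_ae ?_
      filter_upwards [hm₁] with ω h
      rw [h]
    have e0 : ∫ ω, (Y0 ω - m₀ ω) ^ 2 ∂μ
        = ∫ ω, (Y0 ω - (μ[Y0|MeasurableSpace.comap N inferInstance]) ω) ^ 2 ∂μ := by
      refine integral_congr_ae ?_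
      filter_upwards [hm₀] with ω h
      rw [h]
    have ev : variance (fun ω => m₁ ω - m₀ ω) μ
        = variance (fun ω => (μ[Y1|MeasurableSpace.comap N inferInstance]) ω
          - (μ[Y0|MeasurableSpace.comap N inferInstance]) ω) μ := by
      refine aux_var_congr ?_
      filter_upwards [hm₀, hm₁] with ω h0 h1
      rw [h0, h1]
    rw [e1, e0, ev]
    exact h₁
  · exact h₂
end
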